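/- Let Ω be a countably infinite set and let u, v, f ∈ Ω^Ω. If c(u) = ∞, d(u) < ∞, c(f) = c(v) = 0, d(v) > 0, and 0 < d(f) < ∞, then f belongs to the subsemigroup of Ω^Ω generated by S_{1,2,3,4,5} ∪ {u, v}. -/

import Mathlib

/-!
Setting: `Ω` is a countably infinite set, `Function.End Ω = Ω → Ω` is the full
transformation semigroup (a subset is closed under composition in one order iff
it is closed in the other, so the lattice of subsemigroups is unaffected by the
left-to-right convention of the paper).
-/

open Cardinal

/-- A transversal of `f`: a set on which `f` is injective and whose image is all of `Ωf`. -/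
def IsTransversal {Ω : Type*} (f : Ω → Ω) (T : Set Ω) : Prop :=
  Set.InjOn f T ∧ f '' T = Set.range f

/-- The defect `d(f) = |Ω \ Ωf|`. -/
noncomputable def defect {Ω : Type*} (f : Ω → Ω) : Cardinal :=
  #((Set.range f)ᶜ : Set Ω)

/-- The collapse `c(f) = |Ω \ Σ|` for a transversal `Σ` of `f` (the value is
independent of the choice of transversal, so the infimum is the common value). -/
noncomputable def collapse {Ω : Type*} (f : Ω → Ω) : Cardinal :=
  ⨅ T : {T : Set Ω // IsTransversal f T}, #(T.1ᶜ : Set Ω)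

/-- The infinite contraction index `k(f) = |{α : αf⁻¹ infinite}|`. -/
noncomputable def contract {Ω : Type*} (f : Ω → Ω) : Cardinal :=
  #({α : Ω | (f ⁻¹' {α}).Infinite} : Set Ω)

def S1 {Ω : Type*} : Set (Function.End Ω) := {f | collapse f = 0 ∨ 0 < defect f}
def S2 {Ω : Type*} : Set (Function.End Ω) := {f | 0 < collapse f ∨ defect f = 0}
def S3 {Ω : Type*} : Set (Function.End Ω) := {f | collapse f < ℵ₀ ∨ ℵ₀ ≤ defect f}
def S4 {Ω : Type*} : Set (Function.End Ω) := {f | ℵ₀ ≤ collapse f ∨ defect f < ℵ₀}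
def S5 {Ω : Type*} : Set (Function.End Ω) := {f | contract f < ℵ₀}

/-- `Sym(Ω)`, the bijections of `Ω`. -/
def SymOmega {Ω : Type*} : Set (Function.End Ω) := {f | Function.Bijective f}

/-- `U = {f : d(f) = ∞ or 0 < c(f) < ∞} ∪ Sym(Ω)`. -/
def SetU {Ω : Type*} : Set (Function.End Ω) :=
  {f | ℵ₀ ≤ defect f ∨ (0 < collapse f ∧ collapse f < ℵ₀)} ∪ SymOmega

/-- `V = {f : c(f) = ∞ or 0 < d(f) < ∞} ∪ Sym(Ω)`. -/
def SetV {Ω : Type*} : Set (Function.End Ω) :=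
  {f | ℵ₀ ≤ collapse f ∨ (0 < defect f ∧ defect f < ℵ₀)} ∪ SymOmega

/-- `S_{1,2,3,4,5}`. -/
def S12345 {Ω : Type*} : Set (Function.End Ω) := S1 ∩ S2 ∩ S3 ∩ S4 ∩ S5

/-- The family `S_1, …, S_5` indexed by `Fin 5`. -/
def SS {Ω : Type*} : Fin 5 → Set (Function.End Ω) := ![S1, S2, S3, S4, S5]

/-!
If `g` is injective with `0 < d(g) < ∞`, then `f = w ∘ g` for some `w ∈ S_{1,2,3,4,5}`: let `w`
agree with `f ∘ g⁻¹` on `Ωg` and be constant off it. Then `Ωg` is a transversal of `w`, so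
`0 < c(w) ≤ d(g) < ∞`, `d(w) = d(f)`, and only the constant value can have an infinite fibre.

If `d(v) < ∞` take `g = v`. Otherwise take a transversal `Σ` of `u`, which is infinite (as `Ωu` is
cofinite) with infinite complement (as `c(u) = ∞`), and a permutation `p` of the countable set `Ω`
carrying `Ωv` onto `Σ` minus one point `t`. Then `g = u ∘ p ∘ v` is injective and its image is
`Ωu \ {tu}`, so `d(g) = d(u) + 1`.
-/

open Function Set

section Transversal

variable {α : Type*} {f : α → α} {T : Set α}

theorem exists_isTransversal (f : α → α) : ∃ T, IsTransversal f T := by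
  obtain ⟨T, -, hT⟩ := exists_subset_bijOn univ f
  exact ⟨T, hT.injOn, by rw [hT.image_eq, image_univ]⟩

theorem collapse_le_mk_compl (hT : IsTransversal f T) : collapse f ≤ #(Tᶜ : Set α) :=
  ciInf_le (OrderBot.bddBelow _) (⟨T, hT⟩ : {T : Set α // IsTransversal f T})

theorem exists_isTransversal_mk_compl_eq_collapse (f : α → α) :
    ∃ T, IsTransversal f T ∧ #(Tᶜ : Set α) = collapse f := by
  have : Nonempty {T : Set α // IsTransversal f T} :=
    let ⟨T, hT⟩ := exists_isTransversal f; ⟨⟨T, hT⟩⟩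
  obtain ⟨⟨T, hT⟩, h⟩ := ciInf_mem fun T : {T : Set α // IsTransversal f T} ↦ #(T.1ᶜ : Set α)
  exact ⟨T, hT, h⟩

theorem collapse_eq_zero_iff : collapse f = 0 ↔ Injective f := by
  refine ⟨fun h ↦ ?_, fun hf ↦ ?_⟩
  · obtain ⟨T, hT, hTc⟩ := exists_isTransversal_mk_compl_eq_collapse f
    rw [h, mk_eq_zero_iff, isEmpty_coe_sort, compl_empty_iff] at hTc
    exact injOn_univ.mp (hTc ▸ hT.1)
  · have hT : IsTransversal f univ := ⟨hf.injOn, image_univ⟩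
    simpa using collapse_le_mk_compl hT

end Transversal

section Defect

variable {α : Type*} {f : α → α}

theorem defect_eq_zero_iff : defect f = 0 ↔ Surjective f := by
  rw [defect, mk_eq_zero_iff, isEmpty_coe_sort, compl_empty_iff, range_eq_univ]

theorem defect_lt_aleph0_iff : defect f < ℵ₀ ↔ (range f)ᶜ.Finite :=
  lt_aleph0_iff_set_finite

theorem aleph0_le_defect_iff : ℵ₀ ≤ defect f ↔ (range f)ᶜ.Infinite := by
  rw [← not_lt, defect_lt_aleph0_iff, Set.Infinite]

end Defect

theorem contract_eq_zero_of_injective {α : Type*} {f : α → α} (hf : Injective f) :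
    contract f = 0 := by
  rw [contract, mk_eq_zero_iff, isEmpty_coe_sort, eq_empty_iff_forall_notMem]
  exact fun a ha ↦ ha ((finite_singleton a).preimage hf.injOn)

theorem mem_S12345_of_bijective {α : Type*} {f : Function.End α} (hf : Bijective f) :
    f ∈ S12345 := by
  have hc : collapse f = 0 := collapse_eq_zero_iff.mpr hf.1
  have hd : defect f = 0 := defect_eq_zero_iff.mpr hf.2
  have hk : contract f = 0 := contract_eq_zero_of_injective hf.1
  exact ⟨⟨⟨⟨.inl hc, .inr hd⟩, .inl (hc ▸ aleph0_pos)⟩, .inr (hd ▸ aleph0_pos)⟩,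
    show contract f < ℵ₀ from hk ▸ aleph0_pos⟩

theorem mem_S12345_of_pos_of_lt_aleph0 {α : Type*} {f : Function.End α}
    (hc₀ : 0 < collapse f) (hc : collapse f < ℵ₀) (hd₀ : 0 < defect f) (hd : defect f < ℵ₀)
    (hk : contract f < ℵ₀) : f ∈ S12345 :=
  ⟨⟨⟨⟨.inr hd₀, .inl hc₀⟩, .inl hc⟩, .inr hd⟩, hk⟩

theorem exists_mem_S12345_comp_eq {α : Type*} {g f : α → α} (hg : Injective g)
    (hf : Injective f) (hdg₀ : 0 < defect g) (hdg : defect g < ℵ₀) (hdf₀ : 0 < defect f)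
    (hdf : defect f < ℵ₀) : ∃ w : α → α, w ∈ (S12345 : Set (Function.End α)) ∧ w ∘ g = f := by
  obtain ⟨z, hz⟩ : (range g)ᶜ.Nonempty := by
    rwa [← nonempty_coe_sort, ← mk_ne_zero_iff, ← pos_iff_ne_zero]
  have : Nonempty α := ⟨z⟩
  let a := Classical.arbitrary α
  obtain ⟨w, hwg, hwz⟩ : ∃ w : α → α, (∀ x, w (g x) = f x) ∧ ∀ y ∉ range g, w y = f a :=
    ⟨extend g f fun _ ↦ f a, hg.extend_apply f _, fun y hy ↦ extend_apply' _ _ _ hy⟩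
  have hrange : range w = range f := by
    refine Subset.antisymm ?_ fun _ ⟨x, hx⟩ ↦ ⟨g x, (hwg x).trans hx⟩
    rintro _ ⟨y, rfl⟩
    by_cases hy : y ∈ range g
    · obtain ⟨x, rfl⟩ := hy
      exact ⟨x, (hwg x).symm⟩
    · exact ⟨a, (hwz y hy).symm⟩
  have hdw : defect w = defect f := by rw [defect, defect, hrange]
  have hT : IsTransversal w (range g) := by
    refine ⟨?_, by rw [← range_comp, show w ∘ g = f from funext hwg, hrange]⟩
    rintro _ ⟨x, rfl⟩ _ ⟨y, rfl⟩ h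
    rw [hwg, hwg] at h
    rw [hf h]
  have hcw₀ : 0 < collapse w := by
    refine pos_iff_ne_zero.mpr fun h ↦ hz ?_
    rw [collapse_eq_zero_iff.mp h ((hwz z hz).trans (hwg a).symm)]
    exact mem_range_self a
  have hkw : contract w < ℵ₀ := by
    have hsub : {b | (w ⁻¹' {b}).Infinite} ⊆ {f a} := by
      intro b hb
      by_contra hba
      refine hb (Set.Subsingleton.finite ?_)
      rintro y (hy : w y = b) y' (hy' : w y' = b)
      obtain ⟨x, rfl⟩ : y ∈ range g := by_contra fun h ↦ hba ((hwz y h).symm.trans hy).symm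
      obtain ⟨x', rfl⟩ : y' ∈ range g := by_contra fun h ↦ hba ((hwz y' h).symm.trans hy').symm
      rw [hwg] at hy hy'
      rw [hf (hy.trans hy'.symm)]
    exact lt_aleph0_iff_set_finite.mpr ((finite_singleton _).subset hsub)
  exact ⟨w, mem_S12345_of_pos_of_lt_aleph0 hcw₀ ((collapse_le_mk_compl hT).trans_lt hdg)
    (hdw ▸ hdf₀) (hdw ▸ hdf) hkw, funext hwg⟩

theorem Set.Infinite.mk_eq_aleph0 {α : Type*} [Countable α] {s : Set α} (hs : s.Infinite) :
    #s = ℵ₀ :=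
  have := hs.to_subtype
  Cardinal.mk_eq_aleph0 s

theorem exists_perm_image_eq {α : Type*} {A B : Set α} (h : #A = #B)
    (hc : #(Aᶜ : Set α) = #(Bᶜ : Set α)) : ∃ p : Equiv.Perm α, p '' A = B := by
  obtain ⟨e⟩ := Cardinal.eq.mp h
  let f : A ↪ α := e.toEmbedding.trans (Embedding.subtype (· ∈ B))
  have hf : range f = B := by simp [f, Embedding.coe_trans, range_comp]
  obtain ⟨p, hp⟩ := Cardinal.extend_function f (hf ▸ Cardinal.eq.mp hc)
  refine ⟨p, ?_⟩
  rw [image_eq_range, ← hf]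
  exact congrArg range (funext hp)

theorem exists_perm_injective_comp {α : Type*} [Countable α] [Infinite α] {u v : α → α}
    (hcu : ℵ₀ ≤ collapse u) (hdu : defect u < ℵ₀) (hv : Injective v) (hdv : ℵ₀ ≤ defect v) :
    ∃ p : Equiv.Perm α, Injective (u ∘ p ∘ v) ∧ 0 < defect (u ∘ p ∘ v) ∧
      defect (u ∘ p ∘ v) < ℵ₀ := by
  obtain ⟨T, hT⟩ := exists_isTransversal u
  have hT_inf : T.Infinite :=
    Infinite.of_image u (by simpa [hT.2] using (defect_lt_aleph0_iff.mp hdu).infinite_compl)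
  have hTc_inf : Tᶜ.Infinite := by
    rw [← infinite_coe_iff, infinite_iff]
    exact hcu.trans (collapse_le_mk_compl hT)
  obtain ⟨t, ht⟩ := hT_inf.nonempty
  obtain ⟨p, hp⟩ : ∃ p : Equiv.Perm α, p '' range v = T \ {t} :=
    exists_perm_image_eq
      (by rw [(infinite_range_of_injective hv).mk_eq_aleph0,
        (hT_inf.sdiff (finite_singleton t)).mk_eq_aleph0])
      (by rw [(aleph0_le_defect_iff.mp hdv).mk_eq_aleph0,
        (hTc_inf.mono (compl_subset_compl.mpr sdiff_subset)).mk_eq_aleph0])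
  have hpv : range (p ∘ v) = T \ {t} := by rw [range_comp, hp]
  have hrange : range (u ∘ p ∘ v) = range u \ {u t} := by
    rw [range_comp, hpv, hT.1.image_sdiff_subset (singleton_subset_iff.mpr ht), image_singleton,
      hT.2]
  refine ⟨p, fun x y h ↦ p.injective.comp hv (hT.1 ?_ ?_ h), ?_, ?_⟩
  · exact sdiff_subset (hpv ▸ mem_range_self x)
  · exact sdiff_subset (hpv ▸ mem_range_self y)
  · rw [defect, hrange, Set.compl_sdiff, pos_iff_ne_zero, mk_ne_zero_iff]
    exact ⟨⟨u t, .inl rfl⟩⟩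
  · rw [defect_lt_aleph0_iff, hrange, Set.compl_sdiff]
    exact (finite_singleton _).union (defect_lt_aleph0_iff.mp hdu)

theorem stmt8 (Ω : Type) [Countable Ω] [Infinite Ω] (u v f : Function.End Ω)
    (hcu : ℵ₀ ≤ collapse u) (hdu : defect u < ℵ₀)
    (hcf : collapse f = 0) (hcv : collapse v = 0) (hdv : 0 < defect v)
    (hdf : 0 < defect f) (hdf' : defect f < ℵ₀) :
    f ∈ Subsemigroup.closure (S12345 ∪ {u, v}) := by
  have hu : u ∈ Subsemigroup.closure (S12345 ∪ {u, v}) := Subsemigroup.subset_closure (by simp)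
  have hv : v ∈ Subsemigroup.closure (S12345 ∪ {u, v}) := Subsemigroup.subset_closure (by simp)
  have hS : ∀ w ∈ S12345, w ∈ Subsemigroup.closure (S12345 ∪ {u, v}) :=
    fun w hw ↦ Subsemigroup.subset_closure (.inl hw)
  have hv_inj := collapse_eq_zero_iff.mp hcv
  obtain ⟨g, hg, hg_inj, hdg₀, hdg⟩ : ∃ g ∈ Subsemigroup.closure (S12345 ∪ {u, v}),
      Injective g ∧ 0 < defect g ∧ defect g < ℵ₀ := by
    by_cases hdv' : defect v < ℵ₀
    · exact ⟨v, hv, hv_inj, hdv, hdv'⟩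
    · obtain ⟨p, hp⟩ := exists_perm_injective_comp hcu hdu hv_inj (not_lt.mp hdv')
      let q : Function.End Ω := (p : Ω → Ω)
      have hq : q ∈ S12345 := mem_S12345_of_bijective p.bijective
      exact ⟨u * q * v, mul_mem (mul_mem hu (hS q hq)) hv, hp⟩
  obtain ⟨w, hw, hwg⟩ :=
    exists_mem_S12345_comp_eq hg_inj (collapse_eq_zero_iff.mp hcf) hdg₀ hdg hdf hdf'
  exact hwg ▸ mul_mem (hS w hw) hg
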